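/- arXiv:2311.05974 — 2 statements merged into one kernel-verified Lean document; each statement's English description precedes it below -/
import Mathlib

section
/- Let 0 < p < q < ∞ and let W(x), W(y) be positive definite Hermitian matrices in M_m(ℂ). Then ‖W(x)^{1/q} W(y)^{-1/q}‖^q ≤ C ‖W(x)^{1/p} W(y)^{-1/p}‖^p for a constant C depending only on m, p, q. -/
/-! With `X = A^{1/p}`, `Y = B^{-1/p}` and `α = p/q`, the inequality holds with `C = 1`: it is
the Cordes inequality `‖X^α Y^α‖ ≤ ‖X Y‖^α`, raised to the power `q`. The Cordes inequality follows
from operator monotonicity of `t ↦ t^α` (Löwner–Heinz): `‖X Y‖ ≤ c` means `Y X² Y ≤ c²`, i.e.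
`X² ≤ c² Y⁻²`, hence `X^{2α} ≤ c^{2α} Y^{-2α}`, i.e. `Y^α X^{2α} Y^α ≤ c^{2α}`, which says
`‖X^α Y^α‖ ≤ c^α`. -/

open scoped ComplexOrder
open Matrix

/-- The operator norm of an `m × m` complex matrix. -/
noncomputable def opNorm {m : ℕ} (A : Matrix (Fin m) (Fin m) ℂ) : ℝ :=
  ‖Matrix.toEuclideanCLM (𝕜 := ℂ) A‖

/-- The real power `A^r` of a Hermitian matrix, via the spectral functional calculus. -/
noncomputable def matPow {m : ℕ} {A : Matrix (Fin m) (Fin m) ℂ}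
    (hA : A.IsHermitian) (r : ℝ) : Matrix (Fin m) (Fin m) ℂ :=
  hA.cfc (fun t => t ^ r)

section CStarAlgebra

variable {A : Type*} [CStarAlgebra A] [PartialOrder A] [StarOrderedRing A]

lemma CStarAlgebra.norm_le_iff_star_mul_self_le {c : ℝ} (hc : 0 ≤ c) (x : A) :
    ‖x‖ ≤ c ↔ star x * x ≤ algebraMap ℝ A (c ^ 2) := by
  rw [← CStarAlgebra.norm_le_iff_le_algebraMap _ (sq_nonneg c) (star_mul_self_nonneg x),
    CStarRing.norm_star_mul_self, ← sq, sq_le_sq₀ (norm_nonneg x) hc]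

namespace CFC

lemma smul_rpow {r y : ℝ} (hr : 0 ≤ r) (hy : 0 ≤ y) (a : A) (ha : 0 ≤ a := by cfc_tac) :
    (r • a) ^ y = r ^ y • a ^ y := by
  rw [rpow_eq_cfc_real (smul_nonneg hr ha), rpow_eq_cfc_real ha, ← cfc_smul ..,
    ← cfc_comp_smul ..]
  refine cfc_congr fun x hx => ?_
  exact Real.mul_rpow hr (spectrum_nonneg_of_nonneg ha hx)

variable {a b : A}

lemma norm_rpow_mul_rpow_le_of_norm_mul_le (ha : IsStrictlyPositive a)
    (hb : IsStrictlyPositive b) {α : ℝ} (hα : α ∈ Set.Icc 0 1) {c : ℝ} (hc : 0 < c)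
    (hab : ‖a * b‖ ≤ c) : ‖a ^ α * b ^ α‖ ≤ c ^ α := by
  have rpow_mul_rpow (x y : ℝ) : b ^ x * b ^ y = b ^ (x + y) := (rpow_add hb.isUnit).symm
  have hsq : a ^ (2 : ℝ) ≤ c ^ 2 • b ^ (-2 : ℝ) := by
    have h := conjugate_le_conjugate_of_nonneg
      ((CStarAlgebra.norm_le_iff_star_mul_self_le hc.le _).1 hab) (rpow_nonneg (a := b) (y := -1))
    convert h using 1
    · have h1 : b ^ (-1 : ℝ) * b = 1 := by
        simpa [rpow_one b, rpow_zero b] using rpow_mul_rpow (-1) 1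
      have h2 : b * b ^ (-1 : ℝ) = 1 := by
        simpa [rpow_one b, rpow_zero b] using rpow_mul_rpow 1 (-1)
      calc a ^ (2 : ℝ) = (b ^ (-1 : ℝ) * b) * (a * a) * (b * b ^ (-1 : ℝ)) := by
            rw [h1, h2, one_mul, mul_one, ← sq, ← rpow_natCast a 2]; norm_num
        _ = _ := by simp only [star_mul, hb.nonneg.star_eq, ha.nonneg.star_eq, mul_assoc]
    · rw [Algebra.algebraMap_eq_smul_one, mul_smul_comm, smul_mul_assoc, mul_one,
        rpow_mul_rpow]
      norm_num
  have hpow : a ^ (2 * α) ≤ c ^ (2 * α) • b ^ (-2 * α) := by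
    have h := rpow_le_rpow hα hsq
    rwa [smul_rpow (by positivity) hα.1 (b ^ (-2 : ℝ)), rpow_rpow a _ _ two_ne_zero,
      rpow_rpow b _ _ (by norm_num), ← Real.rpow_natCast, ← Real.rpow_mul hc.le] at h
  rw [CStarAlgebra.norm_le_iff_star_mul_self_le (by positivity)]
  convert conjugate_le_conjugate_of_nonneg hpow (rpow_nonneg (a := b) (y := α)) using 1
  · rw [star_mul, rpow_nonneg.star_eq, rpow_nonneg.star_eq, mul_assoc, ← mul_assoc (a ^ α),
      ← rpow_add ha.isUnit, two_mul, mul_assoc]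
  · rw [mul_smul_comm, smul_mul_assoc, rpow_mul_rpow, rpow_mul_rpow, ← Real.rpow_natCast,
      ← Real.rpow_mul hc.le, Algebra.algebraMap_eq_smul_one]
    ring_nf
    rw [rpow_zero b]

lemma norm_rpow_mul_rpow_le (ha : IsStrictlyPositive a) (hb : IsStrictlyPositive b) {α : ℝ}
    (hα : α ∈ Set.Icc 0 1) : ‖a ^ α * b ^ α‖ ≤ ‖a * b‖ ^ α := by
  rcases (norm_nonneg (a * b)).eq_or_lt with hab | hab
  · -- `a * b` is a unit, so it has norm zero only in the zero algebra.
    have : Subsingleton A := by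
      have hunit := ha.isUnit.mul hb.isUnit
      rw [norm_eq_zero.1 hab.symm, isUnit_zero_iff] at hunit
      exact subsingleton_of_zero_eq_one hunit
    rw [Subsingleton.elim (a ^ α * b ^ α) 0, norm_zero]
    positivity
  · exact norm_rpow_mul_rpow_le_of_norm_mul_le ha hb hα hab le_rfl

end CFC

end CStarAlgebra

open scoped Matrix.Norms.L2Operator MatrixOrder

lemma opNorm_eq_norm {m : ℕ} (X : Matrix (Fin m) (Fin m) ℂ) : opNorm X = ‖X‖ := rfl

lemma Matrix.PosDef.matPow_eq_rpow {m : ℕ} {A : Matrix (Fin m) (Fin m) ℂ} (hA : A.PosDef)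
    (r : ℝ) : matPow hA.1 r = A ^ r := by
  rw [matPow, ← hA.1.cfc_eq, CFC.rpow_eq_cfc_real hA.posSemidef.nonneg]

/-- For `0 < p < q` there is `C = C(m,p,q) > 0` such that for all positive definite
`A, B`, `‖A^{1/q} B^{-1/q}‖^q ≤ C ‖A^{1/p} B^{-1/p}‖^p`. -/
theorem pow_opNorm_comparison {m : ℕ} (p q : ℝ) (hp : 0 < p) (hpq : p < q) :
    ∃ C : ℝ, 0 < C ∧ ∀ (A B : Matrix (Fin m) (Fin m) ℂ)
      (hA : A.PosDef) (hB : B.PosDef),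
      opNorm (matPow hA.1 (1 / q) * matPow hB.1 (-(1 / q))) ^ q ≤
        C * opNorm (matPow hA.1 (1 / p) * matPow hB.1 (-(1 / p))) ^ p := by
  have hq : 0 < q := hp.trans hpq
  refine ⟨1, one_pos, fun A B hA hB => ?_⟩
  have hα : p / q ∈ Set.Icc (0 : ℝ) 1 := ⟨(div_pos hp hq).le, (div_le_one hq).2 hpq.le⟩
  have hAq : A ^ (1 / q) = (A ^ (1 / p)) ^ (p / q) := by
    rw [CFC.rpow_rpow A _ _ (by positivity)]; field_simp
  have hBq : B ^ (-(1 / q)) = (B ^ (-(1 / p))) ^ (p / q) := by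
    rw [CFC.rpow_rpow B _ _ (by simp [hp.ne'])]; field_simp
  simp only [opNorm_eq_norm, hA.matPow_eq_rpow, hB.matPow_eq_rpow, hAq, hBq, one_mul]
  calc ‖(A ^ (1 / p)) ^ (p / q) * (B ^ (-(1 / p))) ^ (p / q)‖ ^ q
      ≤ (‖A ^ (1 / p) * B ^ (-(1 / p))‖ ^ (p / q)) ^ q := by
        gcongr
        exact CFC.norm_rpow_mul_rpow_le (.rpow A _ hA.isStrictlyPositive)
          (.rpow B _ hB.isStrictlyPositive) hα
    _ = ‖A ^ (1 / p) * B ^ (-(1 / p))‖ ^ p := by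
        rw [← Real.rpow_mul (norm_nonneg _), div_mul_cancel₀ p hq.ne']
end

section
/- Let a ∈ (-n, ∞), b ∈ ℝ, and define w(x) := |x|^a (log(2 + |x|^{-1}))^b for x ∈ ℝⁿ (with w(0) := 0, interpreted a.e.). Then for every x₀ ∈ ℝⁿ and r > 0, the average ⨍_{B(x₀,r)} w(x) dx is comparable to (|x₀| + r)^a (log(2 + (|x₀| + r)^{-1}))^b, with implicit constants depending only on n, a, b. -/
/-!
The weight `w t = t ^ a * log (2 + t⁻¹) ^ b` is doubling: if `t ≤ K * s` then
`log (2 + s⁻¹) ≤ log K + log (2 + t⁻¹) ≤ (1 + log K / log 2) * log (2 + t⁻¹)`,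
so `w s` and `w t` are comparable whenever `s / t ∈ [K⁻¹, K]`. Put `R = ‖x₀‖ + r`.

Lower bound: the ball `B(y, r/4)` with `y` on the ray through `x₀` and `‖y‖ = ‖x₀‖ + 3r/4`
lies in `B(x₀, r)`, and `R/2 ≤ ‖x‖ ≤ R` on it.

Upper bound: if `‖x₀‖ > 2r` then `R/3 ≤ ‖x‖ ≤ R` on all of `B(x₀, r)`. Otherwise
`B(x₀, r) ⊆ B(0, R)` with `R ≤ 3r`, and `∫_{B(0,R)} w ‖x‖ ≲ R ^ n * w R`: the logarithm grows
slower than any power, `log (2 + t⁻¹) ^ b ≲ (R / t) ^ ε * log (2 + R⁻¹) ^ b` for `t ≤ R`, so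
`w ‖x‖ ≲ R ^ ε * log (2 + R⁻¹) ^ b * ‖x‖ ^ (a - ε)`. With `ε = (a + n) / 2` the last power is
integrable on balls and its integral over `B(0, R)` scales like `R ^ (n + a - ε)`.
-/

open MeasureTheory

/-- The Euclidean norm on `ℝⁿ` realized as `Fin n → ℝ`. -/
noncomputable def euclNorm {n : ℕ} (x : Fin n → ℝ) : ℝ :=
  Real.sqrt (∑ i, x i ^ 2)

/-- The Euclidean ball of center `c` and radius `r`. -/
def euclBall {n : ℕ} (c : Fin n → ℝ) (r : ℝ) : Set (Fin n → ℝ) :=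
  {y | euclNorm (y - c) < r}

open Real

noncomputable def powLog (a b t : ℝ) : ℝ := t ^ a * log (2 + t⁻¹) ^ b

lemma log_two_le_log_two_add_inv {t : ℝ} (ht : 0 ≤ t) : log 2 ≤ log (2 + t⁻¹) :=
  log_le_log two_pos (le_add_of_nonneg_right (inv_nonneg.2 ht))

lemma log_two_add_inv_pos {t : ℝ} (ht : 0 ≤ t) : 0 < log (2 + t⁻¹) :=
  (log_pos one_lt_two).trans_le (log_two_le_log_two_add_inv ht)

lemma log_two_add_inv_le_of_le {s t : ℝ} (hs : 0 < s) (hst : s ≤ t) :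
    log (2 + t⁻¹) ≤ log (2 + s⁻¹) :=
  log_le_log (add_pos_of_pos_of_nonneg two_pos (inv_nonneg.2 (hs.le.trans hst))) (by gcongr)

lemma log_two_add_inv_le_mul {s t K : ℝ} (hs : 0 < s) (ht : 0 < t) (hK : 1 ≤ K)
    (htK : t ≤ K * s) : log (2 + s⁻¹) ≤ (1 + log K / log 2) * log (2 + t⁻¹) := by
  have hlog2 : 0 < log 2 := log_pos one_lt_two
  have hinv : s⁻¹ ≤ K * t⁻¹ := by
    rw [← div_eq_mul_inv, le_div_iff₀ ht, ← div_eq_inv_mul, div_le_iff₀ hs]; linarith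
  have hmul : 2 + s⁻¹ ≤ K * (2 + t⁻¹) := by nlinarith
  have hlogK : log K ≤ log K / log 2 * log (2 + t⁻¹) := by
    rw [div_mul_eq_mul_div, le_div_iff₀ hlog2]
    exact mul_le_mul_of_nonneg_left (log_two_le_log_two_add_inv ht.le) (log_nonneg hK)
  calc log (2 + s⁻¹) ≤ log (K * (2 + t⁻¹)) := log_le_log (by positivity) hmul
    _ = log K + log (2 + t⁻¹) := log_mul (by positivity) (by positivity)
    _ ≤ (1 + log K / log 2) * log (2 + t⁻¹) := by linarith

lemma rpow_le_rpow_abs_mul {s t K : ℝ} (hs : 0 < s) (ht : 0 < t) (hst : s ≤ K * t)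
    (hts : t ≤ K * s) (a : ℝ) : t ^ a ≤ K ^ |a| * s ^ a := by
  have hK : 0 < K := pos_of_mul_pos_left (hs.trans_le hst) ht.le
  rcases le_total 0 a with ha | ha
  · rw [abs_of_nonneg ha, ← mul_rpow hK.le hs.le]
    exact rpow_le_rpow ht.le hts ha
  · rw [abs_of_nonpos ha, rpow_neg hK.le, ← div_eq_inv_mul, ← div_rpow hs.le hK.le]
    exact rpow_le_rpow_of_nonpos (by positivity) (by rwa [div_le_iff₀ hK, mul_comm]) ha

lemma powLog_le_mul_powLog (a b : ℝ) {K : ℝ} (hK : 1 ≤ K) :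
    ∃ C > 0, ∀ s t : ℝ, 0 < s → 0 < t → s ≤ K * t → t ≤ K * s →
      powLog a b t ≤ C * powLog a b s := by
  set K' := 1 + log K / log 2
  have hK' : 1 ≤ K' := le_add_of_nonneg_right (div_nonneg (log_nonneg hK) (log_pos one_lt_two).le)
  refine ⟨K ^ |a| * K' ^ |b|, by positivity, fun s t hs ht hst hts => ?_⟩
  have hLs := log_two_add_inv_pos hs.le
  have hLt := log_two_add_inv_pos ht.le
  have hpow := rpow_le_rpow_abs_mul hs ht hst hts a
  have hlog := rpow_le_rpow_abs_mul hLs hLt (log_two_add_inv_le_mul hs ht hK hts)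
    (log_two_add_inv_le_mul ht hs hK hst) b
  calc powLog a b t ≤ (K ^ |a| * s ^ a) * (K' ^ |b| * log (2 + s⁻¹) ^ b) :=
        mul_le_mul hpow hlog (by positivity) (by positivity)
    _ = K ^ |a| * K' ^ |b| * powLog a b s := by unfold powLog; ring

lemma log_two_add_inv_rpow_le (b : ℝ) {ε : ℝ} (hε : 0 < ε) :
    ∃ C > 0, ∀ t ρ : ℝ, 0 < t → t ≤ ρ →
      log (2 + t⁻¹) ^ b ≤ C * (ρ / t) ^ ε * log (2 + ρ⁻¹) ^ b := by
  rcases le_or_gt b 0 with hb | hb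
  · refine ⟨1, one_pos, fun t ρ ht htρ => ?_⟩
    have hLρ := log_two_add_inv_pos (ht.le.trans htρ)
    calc log (2 + t⁻¹) ^ b ≤ log (2 + ρ⁻¹) ^ b :=
          rpow_le_rpow_of_nonpos hLρ (log_two_add_inv_le_of_le ht htρ) hb
      _ ≤ 1 * (ρ / t) ^ ε * log (2 + ρ⁻¹) ^ b := by
          rw [one_mul]
          exact le_mul_of_one_le_left (by positivity)
            (one_le_rpow ((one_le_div ht).2 htρ) hε.le)
  set δ := ε / b
  have hδ : 0 < δ := div_pos hε hb
  set A := 1 + (δ * log 2)⁻¹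
  refine ⟨A ^ b, by positivity, fun t ρ ht htρ => ?_⟩
  set K := ρ / t
  have hK : 1 ≤ K := (one_le_div ht).2 htρ
  have hρ : 0 < ρ := ht.trans_le htρ
  have hfactor : 1 + log K / log 2 ≤ A * K ^ δ := by
    have := log_le_rpow_div (by positivity : 0 ≤ K) hδ
    calc 1 + log K / log 2 ≤ K ^ δ + K ^ δ / δ / log 2 := by
          gcongr
          exact one_le_rpow hK hδ.le
      _ = A * K ^ δ := by simp only [A]; field_simp
  have hL : log (2 + t⁻¹) ≤ A * K ^ δ * log (2 + ρ⁻¹) :=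
    (log_two_add_inv_le_mul ht hρ hK (by simp [K, ht.ne'])).trans
      (mul_le_mul_of_nonneg_right hfactor (log_two_add_inv_pos hρ.le).le)
  calc log (2 + t⁻¹) ^ b ≤ (A * K ^ δ * log (2 + ρ⁻¹)) ^ b :=
        rpow_le_rpow (log_two_add_inv_pos ht.le).le hL hb.le
    _ = A ^ b * K ^ ε * log (2 + ρ⁻¹) ^ b := by
        rw [mul_rpow (by positivity) (log_two_add_inv_pos hρ.le).le,
          mul_rpow (by positivity) (by positivity), ← rpow_mul (by positivity),
          div_mul_cancel₀ ε hb.ne']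

lemma powLog_nonneg (a b : ℝ) {t : ℝ} (ht : 0 ≤ t) : 0 ≤ powLog a b t :=
  mul_nonneg (rpow_nonneg ht a) (rpow_nonneg (log_two_add_inv_pos ht).le b)

lemma powLog_le_mul_rpow (a b : ℝ) {ε : ℝ} (hε : 0 < ε) :
    ∃ C > 0, ∀ t ρ : ℝ, 0 < t → t ≤ ρ →
      powLog a b t ≤ C * (ρ ^ ε * log (2 + ρ⁻¹) ^ b) * t ^ (a - ε) := by
  obtain ⟨C, hC, hlog⟩ := log_two_add_inv_rpow_le b hε
  refine ⟨C, hC, fun t ρ ht htρ => ?_⟩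
  have hρ : 0 < ρ := ht.trans_le htρ
  have hsplit : t ^ a * (ρ / t) ^ ε = ρ ^ ε * t ^ (a - ε) := by
    rw [div_rpow hρ.le ht.le, rpow_sub ht]; field_simp
  calc powLog a b t ≤ t ^ a * (C * (ρ / t) ^ ε * log (2 + ρ⁻¹) ^ b) :=
        mul_le_mul_of_nonneg_left (hlog t ρ ht htρ) (by positivity)
    _ = C * (ρ ^ ε * log (2 + ρ⁻¹) ^ b) * t ^ (a - ε) := by
        linear_combination C * log (2 + ρ⁻¹) ^ b * hsplit

open Metric Module

lemma exists_norm_sub_eq_and_norm_eq_add {E : Type*} [NormedAddCommGroup E] [NormedSpace ℝ E]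
    [Nontrivial E] (x₀ : E) {t : ℝ} (ht : 0 ≤ t) :
    ∃ y : E, ‖y - x₀‖ = t ∧ ‖y‖ = ‖x₀‖ + t := by
  obtain ⟨u, hu, hx₀⟩ : ∃ u : E, ‖u‖ = 1 ∧ x₀ = ‖x₀‖ • u := by
    rcases eq_or_ne x₀ 0 with rfl | h0
    · obtain ⟨u, hu⟩ := exists_norm_eq E zero_le_one
      exact ⟨u, hu, by simp⟩
    · exact ⟨‖x₀‖⁻¹ • x₀, norm_smul_inv_norm h0, by rw [smul_smul,
        mul_inv_cancel₀ (norm_ne_zero_iff.2 h0), one_smul]⟩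
  refine ⟨(‖x₀‖ + t) • u, ?_, ?_⟩
  · nth_rw 2 [hx₀]
    rw [← sub_smul, add_sub_cancel_left, norm_smul, hu, mul_one, Real.norm_of_nonneg ht]
  · rw [norm_smul, hu, mul_one, Real.norm_of_nonneg (by positivity)]

lemma ball_subset_ball_zero_norm_add {E : Type*} [SeminormedAddCommGroup E] (x₀ : E) (r : ℝ) :
    ball x₀ r ⊆ ball 0 (‖x₀‖ + r) :=
  ball_subset_ball' (by rw [dist_zero_right, add_comm])

section Haar

variable {E : Type*} [NormedAddCommGroup E] [NormedSpace ℝ E] [FiniteDimensional ℝ E]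
  [MeasurableSpace E] [BorelSpace E] (μ : Measure E) [μ.IsAddHaarMeasure]

lemma addHaar_real_ball_of_pos (x : E) {r : ℝ} (hr : 0 < r) :
    μ.real (ball x r) = r ^ finrank ℝ E * μ.real (ball 0 1) := by
  rw [measureReal_def, Measure.addHaar_ball_of_pos μ x hr, ENNReal.toReal_mul,
    ENNReal.toReal_ofReal (by positivity), measureReal_def]

omit [BorelSpace E] in
lemma addHaar_real_ball_pos (x : E) {r : ℝ} (hr : 0 < r) : 0 < μ.real (ball x r) :=
  ENNReal.toReal_pos (measure_ball_pos μ x hr).ne' measure_ball_lt_top.ne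

lemma setIntegral_ball_zero_norm_rpow {ρ : ℝ} (hρ : 0 < ρ) (p : ℝ) :
    ∫ x in ball (0 : E) ρ, ‖x‖ ^ p ∂μ =
      ρ ^ finrank ℝ E * ρ ^ p * ∫ x in ball (0 : E) 1, ‖x‖ ^ p ∂μ := by
  have h := Measure.setIntegral_comp_smul_of_pos μ (fun x : E => ‖x‖ ^ p) (ball 0 1) hρ
  simp only [norm_smul, Real.norm_of_nonneg hρ.le, mul_rpow hρ.le (norm_nonneg _),
    integral_const_mul, smul_unitBall_of_pos hρ, smul_eq_mul] at h
  rw [mul_assoc, h, ← mul_assoc, mul_inv_cancel₀ (by positivity), one_mul]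

variable [Nontrivial E]

lemma integrableOn_ball_zero_norm_rpow {p : ℝ} (hp : -(finrank ℝ E : ℝ) < p) (ρ : ℝ) :
    IntegrableOn (fun x : E => ‖x‖ ^ p) (ball 0 ρ) μ := by
  refine integrableOn_ball_of_norm_le_rpow finrank_pos (C := 1) (α := -p) (by linarith)
    (ae_of_all _ fun x => ?_) (measurable_norm.pow_const p).aestronglyMeasurable
  rw [neg_neg, one_mul, Real.norm_of_nonneg (rpow_nonneg (norm_nonneg x) p)]

variable {μ}

lemma integrableOn_powLog_norm_ball_zero {a : ℝ} (ha : -(finrank ℝ E : ℝ) < a) (b ρ : ℝ) :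
    IntegrableOn (fun x : E => powLog a b ‖x‖) (ball 0 ρ) μ := by
  set ε := (a + finrank ℝ E) / 2 with hε
  obtain ⟨C, -, hC⟩ := powLog_le_mul_rpow a b (ε := ε) (by linarith)
  refine ((integrableOn_ball_zero_norm_rpow μ (p := a - ε) (by linarith) ρ).const_mul
    (C * (ρ ^ ε * log (2 + ρ⁻¹) ^ b))).mono' (by unfold powLog; fun_prop) ?_
  filter_upwards [ae_restrict_mem measurableSet_ball,
    ae_restrict_of_ae (Measure.ae_ne μ 0)] with x hxρ hx0
  rw [Real.norm_of_nonneg (powLog_nonneg a b (norm_nonneg x))]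
  exact hC ‖x‖ ρ (norm_pos_iff.2 hx0) (mem_ball_zero_iff.1 hxρ).le

lemma setIntegral_powLog_norm_ball_zero_le {a : ℝ} (ha : -(finrank ℝ E : ℝ) < a) (b : ℝ) :
    ∃ C ≥ 0, ∀ ρ > 0, ∫ x in ball (0 : E) ρ, powLog a b ‖x‖ ∂μ ≤
      C * ρ ^ finrank ℝ E * powLog a b ρ := by
  set ε := (a + finrank ℝ E) / 2 with hε
  obtain ⟨C, hC0, hC⟩ := powLog_le_mul_rpow a b (ε := ε) (by linarith)
  set I := ∫ x in ball (0 : E) 1, ‖x‖ ^ (a - ε) ∂μ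
  have hI : 0 ≤ I := setIntegral_nonneg measurableSet_ball fun x _ => rpow_nonneg (norm_nonneg x) _
  refine ⟨C * I, by positivity, fun ρ hρ => ?_⟩
  calc ∫ x in ball (0 : E) ρ, powLog a b ‖x‖ ∂μ
      ≤ ∫ x in ball (0 : E) ρ, C * (ρ ^ ε * log (2 + ρ⁻¹) ^ b) * ‖x‖ ^ (a - ε) ∂μ := by
        refine setIntegral_mono_on_ae (integrableOn_powLog_norm_ball_zero ha b ρ)
          ((integrableOn_ball_zero_norm_rpow μ (by linarith) ρ).const_mul _) measurableSet_ball ?_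
        filter_upwards [Measure.ae_ne μ 0] with x hx0 hxρ
        exact hC ‖x‖ ρ (norm_pos_iff.2 hx0) (mem_ball_zero_iff.1 hxρ).le
    _ = C * I * ρ ^ finrank ℝ E * powLog a b ρ := by
        have hρa : ρ ^ ε * ρ ^ (a - ε) = ρ ^ a := by rw [← rpow_add hρ]; ring_nf
        rw [integral_const_mul, setIntegral_ball_zero_norm_rpow μ hρ, powLog, ← hρa]
        ring

lemma le_setAverage_powLog_norm {a : ℝ} (ha : -(finrank ℝ E : ℝ) < a) (b : ℝ) :
    ∃ c > 0, ∀ (x₀ : E) (r : ℝ), 0 < r →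
      c * powLog a b (‖x₀‖ + r) ≤ ⨍ x in ball x₀ r, powLog a b ‖x‖ ∂μ := by
  obtain ⟨C, hC, hcomp⟩ := powLog_le_mul_powLog a b one_le_two
  refine ⟨C⁻¹ * (1 / 4) ^ finrank ℝ E, by positivity, fun x₀ r hr => ?_⟩
  set R := ‖x₀‖ + r with hRdef
  have hR : 0 < R := by positivity
  obtain ⟨y, hyx₀, hy⟩ := exists_norm_sub_eq_and_norm_eq_add x₀ (t := 3 / 4 * r) (by positivity)
  have hsub : ball y (r / 4) ⊆ ball x₀ r :=
    ball_subset_ball' (by rw [dist_eq_norm, hyx₀]; linarith)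
  have hlow : ∀ x ∈ ball y (r / 4), C⁻¹ * powLog a b R ≤ powLog a b ‖x‖ := by
    intro x hx
    rw [mem_ball, dist_eq_norm] at hx
    have h₁ := norm_sub_norm_le y x
    rw [norm_sub_rev] at h₁
    have h₂ := norm_le_norm_add_norm_sub' x y
    rw [inv_mul_le_iff₀ hC]
    have h₃ := norm_nonneg x₀
    exact hcomp ‖x‖ R (by linarith) hR (by linarith) (by linarith)
  have hint : IntegrableOn (fun x => powLog a b ‖x‖) (ball x₀ r) μ :=
    (integrableOn_powLog_norm_ball_zero ha b R).mono_set (ball_subset_ball_zero_norm_add x₀ r)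
  have hm := addHaar_real_ball_pos μ (0 : E) one_pos
  rw [setAverage_eq, smul_eq_mul, addHaar_real_ball_of_pos μ x₀ hr, le_inv_mul_iff₀ (by positivity)]
  calc r ^ finrank ℝ E * μ.real (ball 0 1) * (C⁻¹ * (1 / 4) ^ finrank ℝ E * powLog a b R)
      = C⁻¹ * powLog a b R * μ.real (ball y (r / 4)) := by
        rw [addHaar_real_ball_of_pos μ y (by positivity), div_eq_mul_one_div r 4, mul_pow]; ring
    _ ≤ ∫ x in ball y (r / 4), powLog a b ‖x‖ ∂μ :=
        setIntegral_ge_of_const_le_real measurableSet_ball measure_ball_lt_top.ne hlow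
          (hint.mono_set hsub)
    _ ≤ ∫ x in ball x₀ r, powLog a b ‖x‖ ∂μ :=
        setIntegral_mono_set hint (ae_of_all _ fun x => powLog_nonneg a b (norm_nonneg x))
          (Filter.Eventually.of_forall hsub)

lemma setAverage_powLog_norm_le_of_norm_le {a : ℝ} (ha : -(finrank ℝ E : ℝ) < a) (b : ℝ) :
    ∃ C ≥ 0, ∀ (x₀ : E) (r : ℝ), 0 < r → ‖x₀‖ ≤ 2 * r →
      ⨍ x in ball x₀ r, powLog a b ‖x‖ ∂μ ≤ C * powLog a b (‖x₀‖ + r) := by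
  obtain ⟨C, hC, hint⟩ := setIntegral_powLog_norm_ball_zero_le (μ := μ) ha b
  have hm := addHaar_real_ball_pos μ (0 : E) one_pos
  refine ⟨C * 3 ^ finrank ℝ E / μ.real (ball 0 1), by positivity, fun x₀ r hr hx₀ => ?_⟩
  set R := ‖x₀‖ + r with hRdef
  have hR : 0 < R := by positivity
  have hgR := powLog_nonneg a b hR.le
  rw [setAverage_eq, smul_eq_mul]
  calc (μ.real (ball x₀ r))⁻¹ * ∫ x in ball x₀ r, powLog a b ‖x‖ ∂μ
      ≤ (μ.real (ball x₀ r))⁻¹ * ∫ x in ball 0 R, powLog a b ‖x‖ ∂μ := by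
        refine mul_le_mul_of_nonneg_left ?_ (inv_nonneg.2 measureReal_nonneg)
        exact setIntegral_mono_set (integrableOn_powLog_norm_ball_zero ha b R)
          (ae_of_all _ fun x => powLog_nonneg a b (norm_nonneg x))
          (Filter.Eventually.of_forall (ball_subset_ball_zero_norm_add x₀ r))
    _ ≤ (r ^ finrank ℝ E * μ.real (ball 0 1))⁻¹ * (C * R ^ finrank ℝ E * powLog a b R) := by
        rw [addHaar_real_ball_of_pos μ x₀ hr]
        gcongr
        exact hint R hR
    _ = C * (R / r) ^ finrank ℝ E / μ.real (ball 0 1) * powLog a b R := by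
        rw [div_pow]; field_simp
    _ ≤ C * 3 ^ finrank ℝ E / μ.real (ball 0 1) * powLog a b R := by
        gcongr
        rw [div_le_iff₀ hr]
        linarith

omit [BorelSpace E] [Nontrivial E] in
lemma setAverage_powLog_norm_le_of_lt_norm (a b : ℝ) :
    ∃ C > 0, ∀ (x₀ : E) (r : ℝ), 0 < r → 2 * r < ‖x₀‖ →
      ⨍ x in ball x₀ r, powLog a b ‖x‖ ∂μ ≤ C * powLog a b (‖x₀‖ + r) := by
  obtain ⟨C, hC, hcomp⟩ := powLog_le_mul_powLog a b (K := 3) (by norm_num)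
  refine ⟨C, hC, fun x₀ r hr hx₀ => ?_⟩
  set R := ‖x₀‖ + r with hRdef
  have hR : 0 < R := by positivity
  have hbound : ∀ x ∈ ball x₀ r, ‖powLog a b ‖x‖‖ ≤ C * powLog a b R := by
    intro x hx
    rw [mem_ball, dist_eq_norm] at hx
    have h₁ := norm_sub_norm_le x₀ x
    rw [norm_sub_rev] at h₁
    have h₂ := norm_le_norm_add_norm_sub' x x₀
    rw [Real.norm_of_nonneg (powLog_nonneg a b (norm_nonneg x))]
    exact hcomp R ‖x‖ hR (by linarith) (by linarith) (by linarith)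
  rw [setAverage_eq, smul_eq_mul, inv_mul_le_iff₀ (addHaar_real_ball_pos μ x₀ hr), mul_comm]
  exact (le_abs_self _).trans (norm_setIntegral_le_of_norm_le_const measure_ball_lt_top hbound)

lemma setAverage_powLog_norm_le {a : ℝ} (ha : -(finrank ℝ E : ℝ) < a) (b : ℝ) :
    ∃ C > 0, ∀ (x₀ : E) (r : ℝ), 0 < r →
      ⨍ x in ball x₀ r, powLog a b ‖x‖ ∂μ ≤ C * powLog a b (‖x₀‖ + r) := by
  obtain ⟨C₁, hC₁, hnear⟩ := setAverage_powLog_norm_le_of_norm_le (μ := μ) ha b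
  obtain ⟨C₂, hC₂, hfar⟩ := setAverage_powLog_norm_le_of_lt_norm (μ := μ) a b
  refine ⟨max C₁ C₂, lt_max_of_lt_right hC₂, fun x₀ r hr => ?_⟩
  have hg := powLog_nonneg a b (add_nonneg (norm_nonneg x₀) hr.le)
  rcases le_or_gt ‖x₀‖ (2 * r) with hx₀ | hx₀
  · exact (hnear x₀ r hr hx₀).trans (by gcongr; exact le_max_left _ _)
  · exact (hfar x₀ r hr hx₀).trans (by gcongr; exact le_max_right _ _)

end Haar

lemma MeasureTheory.MeasurePreserving.setAverage_preimage_emb {X Y F : Type*}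
    [MeasurableSpace X] [MeasurableSpace Y] [NormedAddCommGroup F] [NormedSpace ℝ F]
    {μ : Measure X} {ν : Measure Y} {f : X → Y} (hf : MeasurePreserving f μ ν)
    (he : MeasurableEmbedding f) (g : Y → F) (s : Set Y) :
    ⨍ x in f ⁻¹' s, g (f x) ∂μ = ⨍ y in s, g y ∂ν := by
  rw [setAverage_eq, setAverage_eq, hf.setIntegral_preimage_emb he, measureReal_def,
    measureReal_def, hf.measure_preimage_emb he]

lemma euclNorm_eq_norm_toLp {n : ℕ} (x : Fin n → ℝ) : euclNorm x = ‖WithLp.toLp 2 x‖ := by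
  simp only [euclNorm, EuclideanSpace.norm_eq, Real.norm_eq_abs, sq_abs]

lemma euclBall_eq_preimage_ball {n : ℕ} (x₀ : Fin n → ℝ) (r : ℝ) :
    euclBall x₀ r = WithLp.toLp 2 ⁻¹' ball (WithLp.toLp 2 x₀) r := by
  ext x
  simp only [euclBall, Set.mem_ofPred_eq, Set.mem_preimage, mem_ball, dist_eq_norm,
    euclNorm_eq_norm_toLp, WithLp.toLp_sub]

/-- For `a ∈ (-n,∞)`, `b ∈ ℝ` and `w(x) = |x|^a (log(2+|x|⁻¹))^b`, the ball average
`⨍_{B(x₀,r)} w` is comparable to `(|x₀|+r)^a (log(2+(|x₀|+r)⁻¹))^b`, with constants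
depending only on `n, a, b`. -/
theorem ball_average_comparable {n : ℕ} (hn : 0 < n) (a b : ℝ) (ha : -(n : ℝ) < a) :
    ∃ c₁ c₂ : ℝ, 0 < c₁ ∧ 0 < c₂ ∧ ∀ (x₀ : Fin n → ℝ) (r : ℝ), 0 < r →
      c₁ * ((euclNorm x₀ + r) ^ a * Real.log (2 + (euclNorm x₀ + r)⁻¹) ^ b) ≤
        (⨍ x in euclBall x₀ r, euclNorm x ^ a * Real.log (2 + (euclNorm x)⁻¹) ^ b) ∧
      (⨍ x in euclBall x₀ r, euclNorm x ^ a * Real.log (2 + (euclNorm x)⁻¹) ^ b) ≤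
        c₂ * ((euclNorm x₀ + r) ^ a * Real.log (2 + (euclNorm x₀ + r)⁻¹) ^ b) := by
  have : Nonempty (Fin n) := ⟨⟨0, hn⟩⟩
  have ha' : -(finrank ℝ (EuclideanSpace ℝ (Fin n)) : ℝ) < a := by
    rwa [finrank_euclideanSpace_fin]
  obtain ⟨c₁, hc₁, hlow⟩ := le_setAverage_powLog_norm (μ := volume) ha' b
  obtain ⟨c₂, hc₂, hup⟩ := setAverage_powLog_norm_le (μ := volume) ha' b
  refine ⟨c₁, c₂, hc₁, hc₂, fun x₀ r hr => ?_⟩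
  have havg : ⨍ x in euclBall x₀ r, euclNorm x ^ a * log (2 + (euclNorm x)⁻¹) ^ b =
      ⨍ y in ball (WithLp.toLp 2 x₀) r, powLog a b ‖y‖ := by
    simp only [euclBall_eq_preimage_ball, euclNorm_eq_norm_toLp]
    exact (PiLp.volume_preserving_toLp _).setAverage_preimage_emb
      (MeasurableEquiv.toLp 2 _).measurableEmbedding (fun y => powLog a b ‖y‖) _
  rw [havg, euclNorm_eq_norm_toLp x₀]
  exact ⟨hlow _ r hr, hup _ r hr⟩
end
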